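/- There is no type z with Hilbert space H_z = ℂ² ⊗ ℂ² such that Δ_z = Traceless(ℂ²) ⊗ Traceless(ℂ²). In particular, the dimension equation 9 = d_y²(d_x² − 1 − a_x) + a_y(1 + a_x), arising from Δ_{x→y} = [Herm(H_y) ⊗ Δ̄_x] ⊕ [Δ_y ⊗ (L_e ⊕ Δ_x)] with constraints 0 ≤ a_x ≤ d_x² − 1, 0 ≤ a_y ≤ d_y² − 1, has no solution for (d_x, d_y) ∈ {(4,1),(2,2)} consistent with the recursive structure of types. -/

import Mathlib

open Matrix Kronecker
open scoped ComplexOrder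

/-- Types of higher-order quantum theory. The trivial type `I` is `elem 1`. -/
inductive QT where
  | elem (n : ℕ)
  | arrow (x y : QT)

/-- The index type of the Hilbert space `H_x` associated to a type `x`. -/
def Idx : QT → Type
  | .elem n => Fin n
  | .arrow x y => Idx x × Idx y

instance idxFintype : (x : QT) → Fintype (Idx x)
  | .elem n => inferInstanceAs (Fintype (Fin n))
  | .arrow x y =>
      letI := idxFintype x; letI := idxFintype y
      inferInstanceAs (Fintype (Idx x × Idx y))

instance idxDecEq : (x : QT) → DecidableEq (Idx x)
  | .elem n => inferInstanceAs (DecidableEq (Fin n))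
  | .arrow x y =>
      letI := idxDecEq x; letI := idxDecEq y
      inferInstanceAs (DecidableEq (Idx x × Idx y))

/-- Partial trace over the first tensor factor. -/
noncomputable def ptrA {ι κ : Type} [Fintype ι]
    (M : Matrix (ι × κ) (ι × κ) ℂ) : Matrix κ κ ℂ :=
  fun k l => ∑ i : ι, M (i, k) (i, l)

/-- Deterministic events of type `x`, defined recursively: for elementary types,
positive unit-trace operators; for `x → y`, positive operators `R` such that
`Tr_x[(Sᵀ ⊗ 1) R] ∈ Det y` for every `S ∈ Det x`. -/
noncomputable def Det : (x : QT) → Set (Matrix (Idx x) (Idx x) ℂ)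
  | .elem n => {R | R.PosSemidef ∧ R.trace = 1}
  | .arrow x y =>
      setOf (fun (R : Matrix (Idx x × Idx y) (Idx x × Idx y) ℂ) =>
        R.PosSemidef ∧
        ∀ S ∈ Det x, ptrA ((Sᵀ ⊗ₖ (1 : Matrix (Idx y) (Idx y) ℂ)) * R) ∈ Det y)

/-- The real subspace of Hermitian operators. -/
noncomputable def hermSub (ι : Type) [Fintype ι] [DecidableEq ι] :
    Submodule ℝ (Matrix ι ι ℂ) where
  carrier := {X | X.IsHermitian}
  add_mem' := fun ha hb => ha.add hb
  zero_mem' := Matrix.isHermitian_zero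
  smul_mem' := fun c X hX => by
    show ((c • X)ᴴ = c • X)
    rw [Matrix.conjTranspose_smul, star_trivial, hX.eq]

/-- The real subspace of traceless Hermitian operators. -/
noncomputable def tlHermSub (ι : Type) [Fintype ι] [DecidableEq ι] :
    Submodule ℝ (Matrix ι ι ℂ) where
  carrier := {X | X.IsHermitian ∧ X.trace = 0}
  add_mem' := fun ha hb => ⟨ha.1.add hb.1, by rw [trace_add, ha.2, hb.2, add_zero]⟩
  zero_mem' := ⟨Matrix.isHermitian_zero, Matrix.trace_zero ι ℂ⟩
  smul_mem' := fun c X hX =>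
    ⟨by show ((c • X)ᴴ = c • X)
        rw [Matrix.conjTranspose_smul, star_trivial, hX.1.eq],
     by rw [trace_smul, hX.2, smul_zero]⟩

/-- The Hilbert–Schmidt orthogonal complement of `S` inside `B`. -/
noncomputable def perpWithin {ι : Type} [Fintype ι] [DecidableEq ι]
    (S B : Submodule ℝ (Matrix ι ι ℂ)) : Submodule ℝ (Matrix ι ι ℂ) where
  carrier := {Z | Z ∈ B ∧ ∀ Y ∈ S, (Y * Z).trace = 0}
  add_mem' := fun ha hb =>
    ⟨B.add_mem ha.1 hb.1, fun Y hY => by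
      rw [mul_add, trace_add, ha.2 Y hY, hb.2 Y hY, add_zero]⟩
  zero_mem' := ⟨B.zero_mem, fun Y _ => by simp⟩
  smul_mem' := fun c Z hZ =>
    ⟨B.smul_mem c hZ.1, fun Y hY => by
      rw [Matrix.mul_smul, trace_smul, hZ.2 Y hY, smul_zero]⟩

/-- Tensor product of operator subspaces, spanned by Kronecker products. -/
noncomputable def tensorSub {ι κ : Type} [Fintype ι] [DecidableEq ι]
    [Fintype κ] [DecidableEq κ]
    (P : Submodule ℝ (Matrix ι ι ℂ)) (Q : Submodule ℝ (Matrix κ κ ℂ)) :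
    Submodule ℝ (Matrix (ι × κ) (ι × κ) ℂ) :=
  Submodule.span ℝ {A | ∃ X ∈ P, ∃ Y ∈ Q, A = X ⊗ₖ Y}

/-- The one-dimensional subspace `L_e` spanned by the identity. -/
noncomputable def idSub (ι : Type) [Fintype ι] [DecidableEq ι] :
    Submodule ℝ (Matrix ι ι ℂ) :=
  Submodule.span ℝ {(1 : Matrix ι ι ℂ)}

/-- The subspace `Δ_x` of traceless Hermitian operators characterizing the
deterministic events of type `x`:
`Δ_A = Traceless(H_A)` for elementary `A`, and
`Δ_{x→y} = [Herm(H_x) ⊗ Δ_y] ⊕ [Δ̄_x ⊗ Δ_y^⊥]`, where `Δ̄_x` is the complement of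
`Δ_x` inside the traceless Hermitian operators and `Δ_y^⊥` its orthogonal
complement inside the Hermitian operators. -/
noncomputable def Delta : (x : QT) → Submodule ℝ (Matrix (Idx x) (Idx x) ℂ)
  | .elem n => tlHermSub (Fin n)
  | .arrow x y =>
      (tensorSub (hermSub (Idx x)) (Delta y) ⊔
        tensorSub (perpWithin (Delta x) (tlHermSub (Idx x)))
          (perpWithin (Delta y) (hermSub (Idx y))) :
        Submodule ℝ (Matrix (Idx x × Idx y) (Idx x × Idx y) ℂ))

/-- The normalization constant `λ_x`: `λ_A = 1/d_A`, `λ_{x→y} = λ_y/(d_x λ_x)`. -/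
noncomputable def lam : QT → ℝ
  | .elem n => 1 / n
  | .arrow x y => lam y / (Fintype.card (Idx x) * lam x)

/-!
The two summands `Herm(H_x) ⊗ Δ_y` and `Δ̄_x ⊗ Δ_y^⊥` of `Δ_{x→y}` are orthogonal for the real
Hilbert–Schmidt inner product, and Kronecker products of orthonormal bases of Hermitian subspaces
are orthonormal, so with `a_x = dim Δ_x`, `d_x = dim H_x`:
`a_{x→y} = d_x² a_y + (d_x² − 1 − a_x)(d_y² − a_y)`.
As `d_{x→y} = d_x d_y`, both halves of a type with `d ∣ 4` again have `d ∣ 4`, so by induction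
on the type the pair `(d_z, a_z)` stays in the finite list `dimPairsDvdFour`, which is closed
under this recursion and does not contain `(4, 9)`. The two dimension equations are arithmetic.
-/

theorem Submodule.IsOrtho.finrank_sup {𝕜 E : Type*} [RCLike 𝕜] [NormedAddCommGroup E]
    [InnerProductSpace 𝕜 E] {U V : Submodule 𝕜 E} [FiniteDimensional 𝕜 U] [FiniteDimensional 𝕜 V]
    (h : U ⟂ V) : Module.finrank 𝕜 ↥(U ⊔ V) = Module.finrank 𝕜 U + Module.finrank 𝕜 V := by
  rw [← Submodule.finrank_sup_add_finrank_inf_eq, h.disjoint.eq_bot, finrank_bot, add_zero]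

theorem OrthonormalBasis.span_range_coe {𝕜 E m : Type*} [RCLike 𝕜] [NormedAddCommGroup E]
    [InnerProductSpace 𝕜 E] [Fintype m] {s : Submodule 𝕜 E} (b : OrthonormalBasis m 𝕜 s) :
    Submodule.span 𝕜 (Set.range fun i => (b i : E)) = s := by
  have h := congrArg (Submodule.map s.subtype) b.toBasis.span_eq
  rwa [Submodule.map_span, ← Set.range_comp, Submodule.map_top, Submodule.range_subtype,
    OrthonormalBasis.coe_toBasis] at h

namespace Matrix

noncomputable abbrev realFrobeniusCore (ι : Type) [Fintype ι] :
    InnerProductSpace.Core ℝ (Matrix ι ι ℂ) where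
  inner A B := ((Aᴴ * B).trace).re
  conj_inner_symm A B := by
    simp only [conj_trivial]
    rw [← Complex.conj_re, ← Complex.star_def, ← trace_conjTranspose, conjTranspose_mul,
      conjTranspose_conjTranspose]
  re_inner_nonneg A :=
    (Complex.nonneg_iff.1 (posSemidef_conjTranspose_mul_self A).trace_nonneg).1
  add_left A B C := by simp [add_mul]
  smul_left A B r := by simp [smul_mul]
  definite A h := trace_conjTranspose_mul_self_eq_zero_iff.1 <|
    Complex.ext h (Complex.nonneg_iff.1 (posSemidef_conjTranspose_mul_self A).trace_nonneg).2.symm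

noncomputable abbrev realFrobeniusNormedAddCommGroup (ι : Type) [Fintype ι] :
    NormedAddCommGroup (Matrix ι ι ℂ) :=
  (realFrobeniusCore ι).toNormedAddCommGroup

attribute [local instance] realFrobeniusNormedAddCommGroup

noncomputable abbrev realFrobeniusInnerProductSpace (ι : Type) [Fintype ι] :
    InnerProductSpace ℝ (Matrix ι ι ℂ) :=
  InnerProductSpace.ofCore (realFrobeniusCore ι).toCore

attribute [local instance] realFrobeniusInnerProductSpace

variable {ι κ : Type}

theorem IsHermitian.kronecker {A : Matrix ι ι ℂ} {B : Matrix κ κ ℂ} (hA : A.IsHermitian)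
    (hB : B.IsHermitian) : (A ⊗ₖ B).IsHermitian := by
  rw [IsHermitian, conjTranspose_kronecker, hA.eq, hB.eq]

variable [Fintype ι] [Fintype κ]

theorem real_inner_eq_re_trace (A B : Matrix ι ι ℂ) : inner ℝ A B = ((Aᴴ * B).trace).re := rfl

theorem IsHermitian.im_trace_mul {A B : Matrix ι ι ℂ} (hA : A.IsHermitian) (hB : B.IsHermitian) :
    ((A * B).trace).im = 0 := by
  rw [← Complex.conj_eq_iff_im, ← Complex.star_def, ← trace_conjTranspose, conjTranspose_mul,
    hA.eq, hB.eq, trace_mul_comm]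

theorem IsHermitian.real_inner_kronecker {X X' : Matrix ι ι ℂ} {Y Y' : Matrix κ κ ℂ}
    (hX : X.IsHermitian) (hX' : X'.IsHermitian) (hY : Y.IsHermitian) (hY' : Y'.IsHermitian) :
    inner ℝ (X ⊗ₖ Y) (X' ⊗ₖ Y') = inner ℝ X X' * inner ℝ Y Y' := by
  simp only [real_inner_eq_re_trace, conjTranspose_kronecker, ← mul_kronecker_mul, trace_kronecker,
    Complex.mul_re, hX.eq, hY.eq, hX.im_trace_mul hX', hY.im_trace_mul hY', mul_zero, sub_zero]

end Matrix

section Subspaces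

attribute [local instance] realFrobeniusNormedAddCommGroup realFrobeniusInnerProductSpace

variable {ι : Type} [Fintype ι] [DecidableEq ι]

theorem tlHermSub_le_hermSub : tlHermSub ι ≤ hermSub ι := fun _ h => h.1

theorem perpWithin_le (S B : Submodule ℝ (Matrix ι ι ℂ)) : perpWithin S B ≤ B := fun _ h => h.1

theorem idSub_le_hermSub : idSub ι ≤ hermSub ι := by
  rw [idSub, Submodule.span_singleton_le_iff_mem]
  exact isHermitian_one

theorem hermSub_eq_selfAdjoint_submodule :
    hermSub ι = selfAdjoint.submodule ℝ (Matrix ι ι ℂ) := rfl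

theorem finrank_hermSub : Module.finrank ℝ (hermSub ι) = Fintype.card ι ^ 2 := by
  have h := LinearMap.finrank_range_add_finrank_ker (imaginaryPart (A := Matrix ι ι ℂ))
  rw [LinearMap.range_eq_top.2 imaginaryPart_surjective, finrank_top, ker_imaginaryPart,
    Module.finrank_matrix, Complex.finrank_real_complex] at h
  rw [hermSub_eq_selfAdjoint_submodule]
  have hsa : Module.finrank ℝ (selfAdjoint (Matrix ι ι ℂ)) =
      Module.finrank ℝ (selfAdjoint.submodule ℝ (Matrix ι ι ℂ)) := rfl
  rw [sq]
  omega

theorem perpWithin_eq_inf_orthogonal {S B : Submodule ℝ (Matrix ι ι ℂ)}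
    (hS : S ≤ hermSub ι) (hB : B ≤ hermSub ι) : perpWithin S B = B ⊓ Sᗮ := by
  ext Z
  simp only [Submodule.mem_inf, Submodule.mem_orthogonal, real_inner_eq_re_trace]
  refine and_congr_right fun hZ => forall₂_congr fun Y hY => ?_
  rw [(hS hY).eq, Complex.ext_iff, (hS hY).im_trace_mul (hB hZ)]
  simp

theorem finrank_add_finrank_perpWithin {S B : Submodule ℝ (Matrix ι ι ℂ)}
    (hSB : S ≤ B) (hB : B ≤ hermSub ι) :
    Module.finrank ℝ S + Module.finrank ℝ (perpWithin S B) = Module.finrank ℝ B := by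
  rw [perpWithin_eq_inf_orthogonal (hSB.trans hB) hB, inf_comm]
  exact Submodule.finrank_add_inf_finrank_orthogonal hSB

theorem tlHermSub_eq_perpWithin_idSub : tlHermSub ι = perpWithin (idSub ι) (hermSub ι) := by
  ext Z
  refine and_congr_right fun _ =>
    ⟨fun htr Y hY => ?_, fun h => by simpa using h 1 (Submodule.mem_span_singleton_self 1)⟩
  obtain ⟨r, rfl⟩ := Submodule.mem_span_singleton.1 hY
  rw [smul_mul, one_mul, trace_smul, htr, smul_zero]

theorem finrank_tlHermSub : Module.finrank ℝ (tlHermSub ι) = Fintype.card ι ^ 2 - 1 := by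
  cases isEmpty_or_nonempty ι
  · simp [Submodule.eq_bot_of_subsingleton]
  have hid : Module.finrank ℝ (idSub ι) = 1 :=
    finrank_span_singleton (one_ne_zero (α := Matrix ι ι ℂ))
  have h := finrank_add_finrank_perpWithin (idSub_le_hermSub (ι := ι)) le_rfl
  rw [← tlHermSub_eq_perpWithin_idSub, hid, finrank_hermSub] at h
  omega

end Subspaces

section Tensor

open Submodule

attribute [local instance] realFrobeniusNormedAddCommGroup realFrobeniusInnerProductSpace

variable {ι κ : Type} [Fintype ι] [DecidableEq ι] [Fintype κ] [DecidableEq κ]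
  {P P' : Submodule ℝ (Matrix ι ι ℂ)} {Q Q' : Submodule ℝ (Matrix κ κ ℂ)}

theorem tensorSub_eq_map₂ (P : Submodule ℝ (Matrix ι ι ℂ)) (Q : Submodule ℝ (Matrix κ κ ℂ)) :
    tensorSub P Q = map₂ (kroneckerBilinear (R := ℝ)) P Q := by
  rw [map₂_eq_span_image2, tensorSub]
  congr 1
  ext A
  simp only [Set.mem_image2, Set.mem_ofPred_eq, SetLike.mem_coe, eq_comm]
  rfl

theorem tensorSub_span_range {m n : Type*} (u : m → Matrix ι ι ℂ) (v : n → Matrix κ κ ℂ) :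
    tensorSub (span ℝ (Set.range u)) (span ℝ (Set.range v)) =
      span ℝ (Set.range fun p : m × n => u p.1 ⊗ₖ v p.2) := by
  rw [tensorSub_eq_map₂, map₂_span_span, Set.image2_range]
  rfl

theorem finrank_tensorSub (hP : P ≤ hermSub ι) (hQ : Q ≤ hermSub κ) :
    Module.finrank ℝ (tensorSub P Q) = Module.finrank ℝ P * Module.finrank ℝ Q := by
  set bP := stdOrthonormalBasis ℝ P
  set bQ := stdOrthonormalBasis ℝ Q
  have hon : Orthonormal ℝ fun p : _ × _ => (bP p.1 : Matrix ι ι ℂ) ⊗ₖ (bQ p.2 : Matrix κ κ ℂ) := by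
    rw [orthonormal_iff_ite]
    rintro ⟨i, j⟩ ⟨i', j'⟩
    rw [IsHermitian.real_inner_kronecker (hP (bP i).2) (hP (bP i').2) (hQ (bQ j).2) (hQ (bQ j').2),
      ← coe_inner, ← coe_inner, orthonormal_iff_ite.1 bP.orthonormal,
      orthonormal_iff_ite.1 bQ.orthonormal]
    by_cases hi : i = i' <;> by_cases hj : j = j' <;> simp [hi, hj]
  have hspan : tensorSub P Q = span ℝ (Set.range fun p : _ × _ =>
      (bP p.1 : Matrix ι ι ℂ) ⊗ₖ (bQ p.2 : Matrix κ κ ℂ)) := by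
    rw [← tensorSub_span_range (fun i => (bP i : Matrix ι ι ℂ)) (fun j => (bQ j : Matrix κ κ ℂ)),
      bP.span_range_coe, bQ.span_range_coe]
  rw [hspan, finrank_span_eq_card hon.linearIndependent, Fintype.card_prod, Fintype.card_fin,
    Fintype.card_fin]

theorem tensorSub_isOrtho (hP : P ≤ hermSub ι) (hP' : P' ≤ hermSub ι) (hQ : Q ≤ hermSub κ)
    (hQ' : Q' ≤ hermSub κ) (h : Q ⟂ Q') : tensorSub P Q ⟂ tensorSub P' Q' := by
  rw [tensorSub, tensorSub, isOrtho_span]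
  rintro _ ⟨X, hX, Y, hY, rfl⟩ _ ⟨X', hX', Y', hY', rfl⟩
  rw [IsHermitian.real_inner_kronecker (hP hX) (hP' hX') (hQ hY) (hQ' hY'), h.inner_eq hY hY',
    mul_zero]

theorem tensorSub_le_tlHermSub_of_right (hP : P ≤ hermSub ι) (hQ : Q ≤ tlHermSub κ) :
    tensorSub P Q ≤ tlHermSub (ι × κ) := by
  rw [tensorSub, span_le]
  rintro _ ⟨X, hX, Y, hY, rfl⟩
  exact ⟨(hP hX).kronecker (hQ hY).1, by rw [trace_kronecker, (hQ hY).2, mul_zero]⟩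

theorem tensorSub_le_tlHermSub_of_left (hP : P ≤ tlHermSub ι) (hQ : Q ≤ hermSub κ) :
    tensorSub P Q ≤ tlHermSub (ι × κ) := by
  rw [tensorSub, span_le]
  rintro _ ⟨X, hX, Y, hY, rfl⟩
  exact ⟨(hP hX).1.kronecker (hQ hY), by rw [trace_kronecker, (hP hX).2, zero_mul]⟩

end Tensor

section Types

open Submodule

attribute [local instance] realFrobeniusNormedAddCommGroup realFrobeniusInnerProductSpace

theorem card_idx_elem (n : ℕ) : Fintype.card (Idx (.elem n)) = n := Fintype.card_fin n

theorem card_idx_arrow (x y : QT) :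
    Fintype.card (Idx (.arrow x y)) = Fintype.card (Idx x) * Fintype.card (Idx y) :=
  Fintype.card_prod _ _

theorem Delta_le_tlHermSub : ∀ z : QT, Delta z ≤ tlHermSub (Idx z)
  | .elem _ => le_rfl
  | .arrow _ y => sup_le (tensorSub_le_tlHermSub_of_right le_rfl (Delta_le_tlHermSub y))
      (tensorSub_le_tlHermSub_of_left (perpWithin_le _ _) (perpWithin_le _ _))

theorem finrank_Delta_elem (n : ℕ) : Module.finrank ℝ (Delta (.elem n)) = n ^ 2 - 1 :=
  (finrank_tlHermSub (ι := Fin n)).trans (by rw [Fintype.card_fin])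

theorem finrank_Delta_arrow (x y : QT) :
    Module.finrank ℝ (Delta (.arrow x y)) =
      Fintype.card (Idx x) ^ 2 * Module.finrank ℝ (Delta y) +
        (Fintype.card (Idx x) ^ 2 - 1 - Module.finrank ℝ (Delta x)) *
          (Fintype.card (Idx y) ^ 2 - Module.finrank ℝ (Delta y)) := by
  have hDy : Delta y ≤ hermSub (Idx y) := (Delta_le_tlHermSub y).trans tlHermSub_le_hermSub
  have hx := finrank_add_finrank_perpWithin (Delta_le_tlHermSub x) tlHermSub_le_hermSub
  have hy := finrank_add_finrank_perpWithin hDy le_rfl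
  rw [finrank_hermSub] at hy
  have hortho : Delta y ⟂ perpWithin (Delta y) (hermSub (Idx y)) := by
    rw [perpWithin_eq_inf_orthogonal hDy le_rfl]
    exact (isOrtho_orthogonal_right _).mono_right inf_le_right
  refine (tensorSub_isOrtho le_rfl ((perpWithin_le _ _).trans tlHermSub_le_hermSub) hDy
    (perpWithin_le _ _) hortho).finrank_sup.trans ?_
  rw [finrank_tensorSub le_rfl hDy,
    finrank_tensorSub ((perpWithin_le _ _).trans tlHermSub_le_hermSub) (perpWithin_le _ _),
    finrank_hermSub, ← finrank_tlHermSub (ι := Idx x), ← hx, ← hy, Nat.add_sub_cancel_left,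
    Nat.add_sub_cancel_left]

end Types

def dimPairsDvdFour : Finset (ℕ × ℕ) := {(1, 0), (2, 0), (2, 3), (4, 0), (4, 3), (4, 12), (4, 15)}

theorem elem_mem_dimPairsDvdFour {n : ℕ} (hn : n ∣ 4) : (n, n ^ 2 - 1) ∈ dimPairsDvdFour := by
  have hdivisors : ∀ d ∈ Nat.divisors 4, (d, d ^ 2 - 1) ∈ dimPairsDvdFour := by decide
  exact hdivisors n (Nat.mem_divisors.2 ⟨hn, four_ne_zero⟩)

theorem arrow_mem_dimPairsDvdFour {dx ax dy ay : ℕ} (hx : (dx, ax) ∈ dimPairsDvdFour)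
    (hy : (dy, ay) ∈ dimPairsDvdFour) (h : dx * dy ∣ 4) :
    (dx * dy, dx ^ 2 * ay + (dx ^ 2 - 1 - ax) * (dy ^ 2 - ay)) ∈ dimPairsDvdFour := by
  have hclosed : ∀ p ∈ dimPairsDvdFour, ∀ q ∈ dimPairsDvdFour, p.1 * q.1 ∣ 4 →
      (p.1 * q.1, p.1 ^ 2 * q.2 + (p.1 ^ 2 - 1 - p.2) * (q.1 ^ 2 - q.2)) ∈ dimPairsDvdFour := by
    decide
  exact hclosed _ hx _ hy h

theorem card_finrank_Delta_mem_dimPairsDvdFour (z : QT) (hz : Fintype.card (Idx z) ∣ 4) :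
    (Fintype.card (Idx z), Module.finrank ℝ (Delta z)) ∈ dimPairsDvdFour := by
  induction z with
  | elem n =>
    rw [card_idx_elem] at hz ⊢
    rw [finrank_Delta_elem]
    exact elem_mem_dimPairsDvdFour hz
  | arrow x y ihx ihy =>
    rw [card_idx_arrow] at hz ⊢
    rw [finrank_Delta_arrow]
    exact arrow_mem_dimPairsDvdFour (ihx (dvd_of_mul_right_dvd hz)) (ihy (dvd_of_mul_left_dvd hz))
      hz

/-- The inverse characterization problem for `H = ℂ² ⊗ ℂ²` and
`Δ = Traceless(ℂ²) ⊗ Traceless(ℂ²)` (which has real dimension `9`) has no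
solution: there is no type `z` with `dim H_z = 4` and `dim Δ_z = 9`.
In particular, the dimension equation `9 = d_y²(d_x² − 1 − a_x) + a_y(1 + a_x)`
has no solution with `(d_x, d_y) = (2, 2)` and `0 ≤ a_x, a_y ≤ 3`, and the
corresponding equation `6 = 4(3 − a_f) + a_g(1 + a_f)` arising in the case
`(d_x, d_y) = (4, 1)` has no solution with `0 ≤ a_f, a_g ≤ 3`. -/
theorem inverse_characterization_no_go :
    (¬ ∃ z : QT, Fintype.card (Idx z) = 4 ∧ Module.finrank ℝ (Delta z) = 9) ∧
    (¬ ∃ ax ay : ℕ, ax ≤ 3 ∧ ay ≤ 3 ∧ 9 = 4 * (4 - 1 - ax) + ay * (1 + ax)) ∧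
    (¬ ∃ af ag : ℕ, af ≤ 3 ∧ ag ≤ 3 ∧ 6 = 4 * (4 - 1 - af) + ag * (1 + af)) := by
  refine ⟨?_, ?_, ?_⟩
  · rintro ⟨z, hcard, hrank⟩
    have hmem := card_finrank_Delta_mem_dimPairsDvdFour z (hcard ▸ dvd_rfl)
    rw [hcard, hrank] at hmem
    exact absurd hmem (by decide)
  all_goals
    rintro ⟨a, b, ha, hb, h⟩
    interval_cases a <;> omega
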